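/- Let M := {x ∈ H_ℂ : ⟨x, w⟩ = 0 for all w ∈ W + σ(W)}, the orthogonal complement of W + σ(W) for the ℂ-bilinear extension of ⟨,⟩. Then H_ℂ = (W ⊕ σ(W)) ⊕ M as ℂ-vector spaces, M is a two-sided ideal of H_ℂ, and x·m = 0 = m·x for every x ∈ W + σ(W) and every m ∈ M; thus the ℂ-algebra H_ℂ decomposes as the direct sum of the two-sided ideals W ⊕ σ(W) and M. -/

import Mathlib

open scoped TensorProduct

noncomputable section

/-- Complex conjugation on `ℂ` as a `ℚ`-algebra homomorphism. -/
def conjQAlg : ℂ →ₐ[ℚ] ℂ := (Complex.conjAe.restrictScalars ℚ).toAlgHom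

variable (H : Type) [Ring H] [Algebra ℚ H] [FiniteDimensional ℚ H]

/-- The conjugate-linear involution of `H_ℂ = ℂ ⊗[ℚ] H` fixing `H`. -/
def sigmaC : ℂ ⊗[ℚ] H →ₗ[ℚ] ℂ ⊗[ℚ] H :=
  (Algebra.TensorProduct.map conjQAlg (AlgHom.id ℚ H)).toLinearMap

/-- The inclusion of `H` into `H_ℂ = ℂ ⊗[ℚ] H`. -/
def inclH : H →ₐ[ℚ] ℂ ⊗[ℚ] H := Algebra.TensorProduct.includeRight

/-- The data of a polarized weight 2 Hodge structure on a finite-dimensional `ℚ`-algebra `H`,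
compatible with the ring structure:
(i) a Hodge decomposition `H_ℂ = H^{2,0} ⊕ H^{1,1} ⊕ H^{0,2}` with `σ(H^{2,0}) = H^{0,2}`,
`σ(H^{1,1}) = H^{1,1}`;
(ii) a polarization: a symmetric `ℚ`-bilinear form `B` on `H` with `ℂ`-bilinear extension `BC`
to `H_ℂ`, whose associated Hermitian pairing `h(α,β) := BC α (σ β)` makes the Hodge pieces
pairwise orthogonal and is positive definite on `H^{2,0}`, `H^{0,2}` and negative definite on
`H^{1,1}`;
(iii) the product is a morphism of Hodge structures of bidegree `(-1,-1)`:
`H^{p,q}·H^{p',q'} ⊆ H^{p+p'-1,q+q'-1}`;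
(iv) an adjunction `t`: a `ℚ`-linear involution with `t(ab) = t(b)t(a)`,
`⟨ab,c⟩ = ⟨b, t(a)c⟩` and `⟨ab,c⟩ = ⟨a, c·t(b)⟩`. -/
structure HodgeAlgebraData where
  H20 : Submodule ℂ (ℂ ⊗[ℚ] H)
  H11 : Submodule ℂ (ℂ ⊗[ℚ] H)
  H02 : Submodule ℂ (ℂ ⊗[ℚ] H)
  sup_top : H20 ⊔ H11 ⊔ H02 = ⊤
  disj1 : H20 ⊓ (H11 ⊔ H02) = ⊥
  disj2 : H11 ⊓ H02 = ⊥
  sigma_20 : ∀ x ∈ H20, sigmaC H x ∈ H02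
  sigma_02 : ∀ x ∈ H02, sigmaC H x ∈ H20
  sigma_11 : ∀ x ∈ H11, sigmaC H x ∈ H11
  B : H →ₗ[ℚ] H →ₗ[ℚ] ℚ
  B_symm : ∀ a b : H, B a b = B b a
  BC : (ℂ ⊗[ℚ] H) →ₗ[ℂ] (ℂ ⊗[ℚ] H) →ₗ[ℂ] ℂ
  BC_extends : ∀ a b : H, BC (inclH H a) (inclH H b) = (B a b : ℂ)
  BC_symm : ∀ x y, BC x y = BC y x
  BC_conj : ∀ x y, BC (sigmaC H x) (sigmaC H y) = starRingEnd ℂ (BC x y)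
  orth_20_11 : ∀ x ∈ H20, ∀ y ∈ H11, BC x (sigmaC H y) = 0
  orth_20_02 : ∀ x ∈ H20, ∀ y ∈ H02, BC x (sigmaC H y) = 0
  orth_11_02 : ∀ x ∈ H11, ∀ y ∈ H02, BC x (sigmaC H y) = 0
  pos_20 : ∀ x ∈ H20, x ≠ 0 → 0 < (BC x (sigmaC H x)).re ∧ (BC x (sigmaC H x)).im = 0
  pos_02 : ∀ x ∈ H02, x ≠ 0 → 0 < (BC x (sigmaC H x)).re ∧ (BC x (sigmaC H x)).im = 0
  neg_11 : ∀ x ∈ H11, x ≠ 0 → (BC x (sigmaC H x)).re < 0 ∧ (BC x (sigmaC H x)).im = 0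
  mul_20_20 : ∀ x ∈ H20, ∀ y ∈ H20, x * y = 0
  mul_20_11 : ∀ x ∈ H20, ∀ y ∈ H11, x * y ∈ H20
  mul_11_20 : ∀ x ∈ H11, ∀ y ∈ H20, x * y ∈ H20
  mul_11_11 : ∀ x ∈ H11, ∀ y ∈ H11, x * y ∈ H11
  mul_20_02 : ∀ x ∈ H20, ∀ y ∈ H02, x * y ∈ H11
  mul_02_20 : ∀ x ∈ H02, ∀ y ∈ H20, x * y ∈ H11
  mul_02_02 : ∀ x ∈ H02, ∀ y ∈ H02, x * y = 0
  mul_11_02 : ∀ x ∈ H11, ∀ y ∈ H02, x * y ∈ H02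
  mul_02_11 : ∀ x ∈ H02, ∀ y ∈ H11, x * y ∈ H02
  t : H →ₗ[ℚ] H
  t_invol : ∀ a : H, t (t a) = a
  t_mul : ∀ a b : H, t (a * b) = t b * t a
  adj_left : ∀ a b c : H, B (a * b) c = B b (t a * c)
  adj_right : ∀ a b c : H, B (a * b) c = B a (c * t b)

variable {H}

/-- `W := H^{2,0}·H_ℂ`, the `ℂ`-linear span of all products `x·y` with `x ∈ H^{2,0}`,
`y ∈ H_ℂ`. -/
def HodgeAlgebraData.W (D : HodgeAlgebraData H) : Submodule ℂ (ℂ ⊗[ℚ] H) := D.H20 * ⊤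

/-- `σ(W)`, the image of `W` under the conjugation `σ`, as a `ℚ`-subspace of `H_ℂ`. -/
def HodgeAlgebraData.sigmaW (D : HodgeAlgebraData H) : Submodule ℚ (ℂ ⊗[ℚ] H) :=
  (D.W.restrictScalars ℚ).map (sigmaC H)

/-- The `ℂ`-linear extension of `t` to `H_ℂ`. -/
def HodgeAlgebraData.tC (D : HodgeAlgebraData H) : ℂ ⊗[ℚ] H →ₗ[ℂ] ℂ ⊗[ℚ] H :=
  LinearMap.baseChange ℂ D.t

/-- `M`, the orthogonal complement of `W + σ(W)` in `H_ℂ` with respect to the `ℂ`-bilinear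
extension of `⟨,⟩`. -/
def HodgeAlgebraData.M (D : HodgeAlgebraData H) : Submodule ℂ (ℂ ⊗[ℚ] H) :=
  ⨅ w ∈ (D.W.restrictScalars ℚ) ⊔ D.sigmaW, LinearMap.ker (D.BC.flip w)

/-!
`W ⊆ H^{2,0} ⊕ H^{1,1}` is a right ideal, isotropic for `⟨,⟩` by the adjunction and the
orthogonality of the Hodge pieces, while the Hermitian form `h` is nondegenerate on `W` because it
is definite on `H^{2,0}` and on `H^{1,1}`. Hence `⟨,⟩` pairs `W` and `σ(W)` perfectly, so it is
nondegenerate on `U := W + σ(W)` and `H_ℂ = U ⊕ U^⊥`. Since `H^{2,0}·H_ℂ ⊆ W`,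
`H^{0,2}·H_ℂ ⊆ σ(W)` and `H^{1,1}` preserves both, `U` is a two-sided ideal; by the adjunction so
is `M = U^⊥`, and then `U·M` and `M·U` lie in `U ∩ M = 0`.
-/

section
omit [FiniteDimensional ℚ H]

theorem sigmaC_tmul (z : ℂ) (a : H) : sigmaC H (z ⊗ₜ a) = starRingEnd ℂ z ⊗ₜ a := rfl

theorem sigmaC_mul (x y : ℂ ⊗[ℚ] H) : sigmaC H (x * y) = sigmaC H x * sigmaC H y :=
  map_mul (Algebra.TensorProduct.map conjQAlg (AlgHom.id ℚ H)) x y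

theorem sigmaC_sigmaC (x : ℂ ⊗[ℚ] H) : sigmaC H (sigmaC H x) = x := by
  induction x using TensorProduct.induction_on with
  | zero => simp
  | tmul z a => simp [sigmaC_tmul]
  | add x y hx hy => simp [hx, hy]

theorem sigmaC_smul (c : ℂ) (x : ℂ ⊗[ℚ] H) :
    sigmaC H (c • x) = starRingEnd ℂ c • sigmaC H x := by
  induction x using TensorProduct.induction_on with
  | zero => simp
  | tmul z a => simp [TensorProduct.smul_tmul', sigmaC_tmul]
  | add x y hx hy => simp [hx, hy]

variable (H) in
def sigmaSL : ℂ ⊗[ℚ] H →ₛₗ[starRingEnd ℂ] ℂ ⊗[ℚ] H where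
  toFun := sigmaC H
  map_add' := map_add _
  map_smul' := sigmaC_smul

theorem span_range_inclH : Submodule.span ℂ (Set.range (inclH H)) = ⊤ := by
  refine Submodule.eq_top_iff'.2 fun x => ?_
  induction x using TensorProduct.induction_on with
  | zero => exact zero_mem _
  | tmul z a =>
    rw [← mul_one z, ← smul_eq_mul, ← TensorProduct.smul_tmul']
    exact Submodule.smul_mem _ _ (Submodule.subset_span ⟨a, rfl⟩)
  | add x y hx hy => exact add_mem hx hy

@[elab_as_elim]
theorem inclH_induction {motive : ℂ ⊗[ℚ] H → Prop} (incl : ∀ a, motive (inclH H a))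
    (zero : motive 0) (add : ∀ x y, motive x → motive y → motive (x + y))
    (smul : ∀ (c : ℂ) x, motive x → motive (c • x)) (x : ℂ ⊗[ℚ] H) : motive x :=
  Submodule.span_induction (p := fun x _ => motive x) (by rintro _ ⟨a, rfl⟩; exact incl a) zero
    (fun x y _ _ => add x y) (fun c x _ => smul c x) (span_range_inclH (H := H) ▸ Submodule.mem_top)

namespace HodgeAlgebraData

variable (D : HodgeAlgebraData H)

theorem tC_inclH (a : H) : D.tC (inclH H a) = inclH H (D.t a) := by
  simp [HodgeAlgebraData.tC, inclH]

theorem BC_mul_left (a b c : ℂ ⊗[ℚ] H) : D.BC (a * b) c = D.BC b (D.tC a * c) := by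
  induction a using inclH_induction generalizing b c
  case incl a =>
    induction b using inclH_induction generalizing c
    case incl b =>
      induction c using inclH_induction
      case incl c => rw [← map_mul, tC_inclH, ← map_mul, D.BC_extends, D.BC_extends, D.adj_left]
      all_goals simp_all [mul_add]
    all_goals simp_all [mul_add]
  all_goals simp_all [add_mul]

theorem BC_mul_right (a b c : ℂ ⊗[ℚ] H) : D.BC (a * b) c = D.BC a (c * D.tC b) := by
  induction a using inclH_induction generalizing b c
  case incl a =>
    induction b using inclH_induction generalizing c
    case incl b =>
      induction c using inclH_induction
      case incl c => rw [← map_mul, tC_inclH, ← map_mul, D.BC_extends, D.BC_extends, D.adj_right]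
      all_goals simp_all [add_mul]
    all_goals simp_all [mul_add]
  all_goals simp_all [add_mul]

theorem BC_sigmaC_comm (x y : ℂ ⊗[ℚ] H) :
    D.BC x (sigmaC H y) = starRingEnd ℂ (D.BC y (sigmaC H x)) := by
  rw [← D.BC_conj, sigmaC_sigmaC, D.BC_symm]

theorem BC_eq_zero_of_mem_H20_of_mem_H20 {x y : ℂ ⊗[ℚ] H} (hx : x ∈ D.H20) (hy : y ∈ D.H20) :
    D.BC x y = 0 := by
  simpa [sigmaC_sigmaC] using D.orth_20_02 x hx _ (D.sigma_20 y hy)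

theorem BC_eq_zero_of_mem_H20_of_mem_H11 {x y : ℂ ⊗[ℚ] H} (hx : x ∈ D.H20) (hy : y ∈ D.H11) :
    D.BC x y = 0 := by
  simpa [sigmaC_sigmaC] using D.orth_20_11 x hx _ (D.sigma_11 y hy)

theorem eq_zero_of_mem_H20 {x : ℂ ⊗[ℚ] H} (hx : x ∈ D.H20) (h : D.BC x (sigmaC H x) = 0) :
    x = 0 := by
  by_contra hne
  simpa [h] using (D.pos_20 x hx hne).1

theorem eq_zero_of_mem_H11 {x : ℂ ⊗[ℚ] H} (hx : x ∈ D.H11) (h : D.BC x (sigmaC H x) = 0) :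
    x = 0 := by
  by_contra hne
  simpa [h] using (D.neg_11 x hx hne).1

theorem exists_eq_add_add (a : ℂ ⊗[ℚ] H) :
    ∃ x ∈ D.H20, ∃ y ∈ D.H11, ∃ z ∈ D.H02, a = x + y + z := by
  obtain ⟨u, hu, z, hz, rfl⟩ := Submodule.mem_sup.1 (D.sup_top ▸ Submodule.mem_top : a ∈ _)
  obtain ⟨x, hx, y, hy, rfl⟩ := Submodule.mem_sup.1 hu
  exact ⟨x, hx, y, hy, z, hz, rfl⟩

theorem mul_mem_W {x : ℂ ⊗[ℚ] H} (hx : x ∈ D.H20) (y : ℂ ⊗[ℚ] H) : x * y ∈ D.W :=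
  Submodule.mul_mem_mul hx Submodule.mem_top

theorem H20_le_W : D.H20 ≤ D.W := fun x hx => mul_one x ▸ D.mul_mem_W hx 1

theorem W_mul_mem {w : ℂ ⊗[ℚ] H} (hw : w ∈ D.W) (a : ℂ ⊗[ℚ] H) : w * a ∈ D.W := by
  refine Submodule.mul_induction_on hw (fun x hx y _ => ?_) (fun u v hu hv => ?_)
  · rw [mul_assoc]; exact D.mul_mem_W hx _
  · rw [add_mul]; exact add_mem hu hv

theorem mul_mem_W_of_mem_H11 {y w : ℂ ⊗[ℚ] H} (hy : y ∈ D.H11) (hw : w ∈ D.W) : y * w ∈ D.W := by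
  refine Submodule.mul_induction_on hw (fun x hx z _ => ?_) (fun u v hu hv => ?_)
  · rw [← mul_assoc]; exact D.mul_mem_W (D.mul_11_20 y hy x hx) _
  · rw [mul_add]; exact add_mem hu hv

theorem W_le_H20_sup_H11 : D.W ≤ D.H20 ⊔ D.H11 := by
  refine Submodule.mul_le.2 fun x hx a _ => ?_
  obtain ⟨u, hu, v, hv, w, hw, rfl⟩ := D.exists_eq_add_add a
  rw [mul_add, mul_add, D.mul_20_20 x hx u hu, zero_add]
  exact add_mem (Submodule.mem_sup_left (D.mul_20_11 x hx v hv))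
    (Submodule.mem_sup_right (D.mul_20_02 x hx w hw))

theorem BC_eq_zero_of_mem_W {x y : ℂ ⊗[ℚ] H} (hx : x ∈ D.W) (hy : y ∈ D.W) : D.BC x y = 0 := by
  refine Submodule.mul_induction_on hx (fun u hu a _ => ?_) (fun u v hu hv => ?_)
  · obtain ⟨p, hp, q, hq, hpq⟩ := Submodule.mem_sup.1 (D.W_le_H20_sup_H11 (D.W_mul_mem hy (D.tC a)))
    rw [BC_mul_right, ← hpq, map_add, D.BC_eq_zero_of_mem_H20_of_mem_H20 hu hp,
      D.BC_eq_zero_of_mem_H20_of_mem_H11 hu hq, add_zero]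
  · rw [map_add, LinearMap.add_apply, hu, hv, add_zero]

theorem eq_zero_of_forall_BC_sigmaC_eq_zero {w : ℂ ⊗[ℚ] H} (hw : w ∈ D.W)
    (h : ∀ w' ∈ D.W, D.BC w (sigmaC H w') = 0) : w = 0 := by
  -- `h(x + y, x) = h(x, x)` forces `x = 0`, and then `h(y, y) = 0` forces `y = 0`.
  obtain ⟨x, hx, y, hy, rfl⟩ := Submodule.mem_sup.1 (D.W_le_H20_sup_H11 hw)
  have hyx : D.BC y (sigmaC H x) = 0 := by
    rw [BC_sigmaC_comm, D.orth_20_11 x hx y hy, map_zero]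
  have hx0 : x = 0 := D.eq_zero_of_mem_H20 hx <| by
    simpa [hyx] using h x (D.H20_le_W hx)
  subst hx0
  simp only [zero_add] at hw h ⊢
  exact D.eq_zero_of_mem_H11 hy (h y hw)

def conjW : Submodule ℂ (ℂ ⊗[ℚ] H) := D.W.map (sigmaSL H)

def U : Submodule ℂ (ℂ ⊗[ℚ] H) := D.W ⊔ D.conjW

theorem restrictScalars_conjW : D.conjW.restrictScalars ℚ = D.sigmaW := rfl

theorem restrictScalars_U : D.U.restrictScalars ℚ = D.W.restrictScalars ℚ ⊔ D.sigmaW :=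
  Submodule.restrictScalars_sup ℚ _ _

theorem mem_conjW_iff {v : ℂ ⊗[ℚ] H} : v ∈ D.conjW ↔ sigmaC H v ∈ D.W :=
  ⟨fun ⟨w, hw, hwv⟩ => hwv ▸ (sigmaC_sigmaC w).symm ▸ hw, fun hv => ⟨_, hv, sigmaC_sigmaC v⟩⟩

theorem sigmaC_mem_conjW {w : ℂ ⊗[ℚ] H} (hw : w ∈ D.W) : sigmaC H w ∈ D.conjW := by
  rwa [mem_conjW_iff, sigmaC_sigmaC]

theorem BC_eq_zero_of_mem_conjW {x y : ℂ ⊗[ℚ] H} (hx : x ∈ D.conjW) (hy : y ∈ D.conjW) :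
    D.BC x y = 0 := by
  rw [mem_conjW_iff] at hx hy
  rw [← sigmaC_sigmaC x, ← sigmaC_sigmaC y, D.BC_conj, D.BC_eq_zero_of_mem_W hx hy, map_zero]

theorem mul_mem_conjW {z : ℂ ⊗[ℚ] H} (hz : z ∈ D.H02) (y : ℂ ⊗[ℚ] H) : z * y ∈ D.conjW := by
  rw [mem_conjW_iff, sigmaC_mul]
  exact D.mul_mem_W (D.sigma_02 z hz) _

theorem conjW_mul_mem {v : ℂ ⊗[ℚ] H} (hv : v ∈ D.conjW) (a : ℂ ⊗[ℚ] H) : v * a ∈ D.conjW := by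
  rw [mem_conjW_iff, sigmaC_mul] at *
  exact D.W_mul_mem hv _

theorem mul_mem_conjW_of_mem_H11 {y v : ℂ ⊗[ℚ] H} (hy : y ∈ D.H11) (hv : v ∈ D.conjW) :
    y * v ∈ D.conjW := by
  rw [mem_conjW_iff, sigmaC_mul] at *
  exact D.mul_mem_W_of_mem_H11 (D.sigma_11 y hy) hv

theorem U_mul_mem {u : ℂ ⊗[ℚ] H} (hu : u ∈ D.U) (a : ℂ ⊗[ℚ] H) : u * a ∈ D.U := by
  obtain ⟨w, hw, v, hv, rfl⟩ := Submodule.mem_sup.1 hu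
  rw [add_mul]
  exact add_mem (Submodule.mem_sup_left (D.W_mul_mem hw a))
    (Submodule.mem_sup_right (D.conjW_mul_mem hv a))

theorem mul_mem_U (a : ℂ ⊗[ℚ] H) {u : ℂ ⊗[ℚ] H} (hu : u ∈ D.U) : a * u ∈ D.U := by
  obtain ⟨x, hx, y, hy, z, hz, rfl⟩ := D.exists_eq_add_add a
  obtain ⟨w, hw, v, hv, rfl⟩ := Submodule.mem_sup.1 hu
  rw [add_mul, add_mul, mul_add y]
  refine add_mem (add_mem (Submodule.mem_sup_left (D.mul_mem_W hx _)) (add_mem ?_ ?_))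
    (Submodule.mem_sup_right (D.mul_mem_conjW hz _))
  · exact Submodule.mem_sup_left (D.mul_mem_W_of_mem_H11 hy hw)
  · exact Submodule.mem_sup_right (D.mul_mem_conjW_of_mem_H11 hy hv)

theorem eq_zero_of_mem_W_of_forall_mem_conjW {w : ℂ ⊗[ℚ] H} (hw : w ∈ D.W)
    (h : ∀ v ∈ D.conjW, D.BC w v = 0) : w = 0 :=
  D.eq_zero_of_forall_BC_sigmaC_eq_zero hw fun _ hw' => h _ (D.sigmaC_mem_conjW hw')

theorem eq_zero_of_mem_conjW_of_forall_mem_W {v : ℂ ⊗[ℚ] H} (hv : v ∈ D.conjW)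
    (h : ∀ w ∈ D.W, D.BC v w = 0) : v = 0 := by
  rw [mem_conjW_iff] at hv
  rw [← sigmaC_sigmaC v, D.eq_zero_of_forall_BC_sigmaC_eq_zero hv fun w hw => ?_, map_zero]
  rw [D.BC_conj, h w hw, map_zero]

theorem W_inf_conjW : D.W ⊓ D.conjW = ⊥ :=
  eq_bot_iff.2 fun _ ⟨hW, hconj⟩ =>
    D.eq_zero_of_mem_W_of_forall_mem_conjW hW fun _ hv => D.BC_eq_zero_of_mem_conjW hconj hv

theorem eq_zero_of_mem_U {u : ℂ ⊗[ℚ] H} (hu : u ∈ D.U) (h : ∀ u' ∈ D.U, D.BC u u' = 0) :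
    u = 0 := by
  obtain ⟨w, hw, v, hv, rfl⟩ := Submodule.mem_sup.1 hu
  have hw0 : w = 0 := D.eq_zero_of_mem_W_of_forall_mem_conjW hw fun v' hv' => by
    simpa [D.BC_eq_zero_of_mem_conjW hv hv'] using h v' (Submodule.mem_sup_right hv')
  have hv0 : v = 0 := D.eq_zero_of_mem_conjW_of_forall_mem_W hv fun w' hw' => by
    simpa [D.BC_eq_zero_of_mem_W hw hw'] using h w' (Submodule.mem_sup_left hw')
  rw [hw0, hv0, add_zero]

theorem mem_M_iff {m : ℂ ⊗[ℚ] H} : m ∈ D.M ↔ ∀ u ∈ D.U, D.BC m u = 0 := by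
  simp [HodgeAlgebraData.M, ← restrictScalars_U]

theorem M_eq_orthogonal : D.M = LinearMap.BilinForm.orthogonal D.BC D.U := by
  ext m
  simp only [mem_M_iff, LinearMap.BilinForm.mem_orthogonal_iff, D.BC_symm m]

theorem mul_mem_M (a : ℂ ⊗[ℚ] H) {m : ℂ ⊗[ℚ] H} (hm : m ∈ D.M) : a * m ∈ D.M := by
  rw [mem_M_iff] at *
  exact fun u hu => (D.BC_mul_left a m u).trans (hm _ (D.mul_mem_U _ hu))

theorem M_mul_mem {m : ℂ ⊗[ℚ] H} (hm : m ∈ D.M) (a : ℂ ⊗[ℚ] H) : m * a ∈ D.M := by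
  rw [mem_M_iff] at *
  exact fun u hu => (D.BC_mul_right m a u).trans (hm _ (D.U_mul_mem hu _))

theorem U_inf_M : D.U ⊓ D.M = ⊥ :=
  eq_bot_iff.2 fun _ ⟨hU, hM⟩ => D.eq_zero_of_mem_U hU (D.mem_M_iff.1 hM)

theorem eq_zero_of_mem_U_of_mem_M {x : ℂ ⊗[ℚ] H} (hU : x ∈ D.U) (hM : x ∈ D.M) : x = 0 :=
  (Submodule.mem_bot ℂ).1 (D.U_inf_M ▸ ⟨hU, hM⟩)

end HodgeAlgebraData

end

theorem HodgeAlgebraData.isCompl_U_M (D : HodgeAlgebraData H) : IsCompl D.U D.M := by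
  rw [M_eq_orthogonal, LinearMap.BilinForm.isCompl_orthogonal_iff_disjoint
    fun x y h => (D.BC_symm y x).trans h, ← M_eq_orthogonal, disjoint_iff]
  exact D.U_inf_M

/-- With `M` the orthogonal complement of `W + σ(W)` for `⟨,⟩`, one has
`H_ℂ = (W ⊕ σ(W)) ⊕ M` as `ℂ`-vector spaces, `M` is a two-sided ideal of `H_ℂ`, and
`x·m = 0 = m·x` for `x ∈ W + σ(W)` and `m ∈ M`; thus the `ℂ`-algebra `H_ℂ` decomposes as
the direct sum of the two-sided ideals `W ⊕ σ(W)` and `M`. -/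
theorem orthogonal_algebra_decomposition (D : HodgeAlgebraData H) :
    (D.W.restrictScalars ℚ) ⊓ D.sigmaW = ⊥ ∧
    ((D.W.restrictScalars ℚ) ⊔ D.sigmaW) ⊓ (D.M.restrictScalars ℚ) = ⊥ ∧
    ((D.W.restrictScalars ℚ) ⊔ D.sigmaW) ⊔ (D.M.restrictScalars ℚ) = ⊤ ∧
    (∀ m ∈ D.M, ∀ a : ℂ ⊗[ℚ] H, a * m ∈ D.M ∧ m * a ∈ D.M) ∧
    (∀ x ∈ (D.W.restrictScalars ℚ) ⊔ D.sigmaW, ∀ m ∈ D.M, x * m = 0 ∧ m * x = 0) := by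
  rw [← D.restrictScalars_U, ← D.restrictScalars_conjW]
  refine ⟨?_, ?_, ?_, fun m hm a => ⟨D.mul_mem_M a hm, D.M_mul_mem hm a⟩, fun x hx m hm => ?_⟩
  · rw [← Submodule.restrictScalars_inf, D.W_inf_conjW, Submodule.restrictScalars_bot]
  · rw [← Submodule.restrictScalars_inf, D.U_inf_M, Submodule.restrictScalars_bot]
  · rw [← Submodule.restrictScalars_sup, D.isCompl_U_M.sup_eq_top, Submodule.restrictScalars_top]
  · exact ⟨D.eq_zero_of_mem_U_of_mem_M (D.U_mul_mem hx m) (D.mul_mem_M x hm),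
      D.eq_zero_of_mem_U_of_mem_M (D.mul_mem_U m hx) (D.M_mul_mem hm x)⟩
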